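/- (Theorem 5.6, Kan adjunction bijection) The assignment φ ↦ φ* is an order-preserving bijection between Q-distributors 𝔸 ⇸ 𝔹 and left adjoint Q-functors P𝔹 → P𝔸. Precisely: (i) if G : P𝔹 → P𝔸 satisfies P𝔹(λ,λ') ≤ P𝔸(G(λ),G(λ')) for all λ, λ' ∈ P𝔹 and there exists H : P𝔸 → P𝔹 with P𝔸(G(λ),μ) = P𝔹(λ,H(μ)) for all λ ∈ P𝔹 and μ ∈ P𝔸, then the map φ_G defined by φ_G(x,y) = G(𝔹(·,y))(x) is a Q-distributor 𝔸 ⇸ 𝔹 and G(λ) = (φ_G)*(λ) for all λ ∈ P𝔹; (ii) for every Q-distributor φ : 𝔸 ⇸ 𝔹, φ*(𝔹(·,y))(x) = φ(x,y) for all x, y; (iii) for Q-distributors φ, ψ : 𝔸 ⇸ 𝔹, one has φ(x,y) ≤ ψ(x,y) for all x, y if and only if φ*(λ)(x) ≤ ψ*(λ)(x) for all λ ∈ P𝔹 and x ∈ A. -/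

import Mathlib

open IsQuantale

variable {Q : Type*} [Monoid Q] [CompleteLattice Q] [IsQuantale Q]

/-- Left implication `x ↙ y`: the largest `z` with `z * y ≤ x`. -/
def lres (x y : Q) : Q := sSup {z | z * y ≤ x}

/-- Right implication `y ↘ x`: the largest `z` with `y * z ≤ x`. -/
def rres (y x : Q) : Q := sSup {z | y * z ≤ x}

/-- A Q-category structure on a type `A`. -/
structure IsQCat {A : Type*} (𝔸 : A → A → Q) : Prop where
  refl : ∀ x, 1 ≤ 𝔸 x x
  comp : ∀ x y z, 𝔸 y z * 𝔸 x y ≤ 𝔸 x z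

/-- A Q-distributor `φ : 𝔸 ⇸ 𝔹`. -/
structure IsQDist {A B : Type*} (𝔸 : A → A → Q) (𝔹 : B → B → Q) (φ : A → B → Q) : Prop where
  comp_left : ∀ x y y', 𝔹 y' y * φ x y' ≤ φ x y
  comp_right : ∀ x x' y, φ x' y * 𝔸 x x' ≤ φ x y

/-- A Q-functor `F : 𝔸 → 𝔹`. -/
def IsQFunctor {A B : Type*} (𝔸 : A → A → Q) (𝔹 : B → B → Q) (F : A → B) : Prop :=
  ∀ x x', 𝔸 x x' ≤ 𝔹 (F x) (F x')

/-- A contravariant presheaf on `𝔸`. -/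
def IsContraPsh {A : Type*} (𝔸 : A → A → Q) (μ : A → Q) : Prop :=
  ∀ x x', μ x' * 𝔸 x x' ≤ μ x

/-- A covariant presheaf on `𝔹`. -/
def IsCoPsh {B : Type*} (𝔹 : B → B → Q) (lam : B → Q) : Prop :=
  ∀ y y', 𝔹 y y' * lam y ≤ lam y'

/-- `φ↑(μ)(y) = ⨅ x, φ(x,y) ↙ μ(x)`. -/
def phiUp {A B : Type*} (φ : A → B → Q) (μ : A → Q) : B → Q :=
  fun y => ⨅ x, lres (φ x y) (μ x)

/-- `φ↓(λ)(x) = ⨅ y, λ(y) ↘ φ(x,y)`. -/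
def phiDown {A B : Type*} (φ : A → B → Q) (lam : B → Q) : A → Q :=
  fun x => ⨅ y, rres (lam y) (φ x y)

/-- `φ*(λ)(x) = ⨆ y, λ(y) * φ(x,y)`. -/
def phiStar {A B : Type*} (φ : A → B → Q) (lam : B → Q) : A → Q :=
  fun x => ⨆ y, lam y * φ x y

/-- `φ_*(μ)(y) = ⨅ x, μ(x) ↙ φ(x,y)`. -/
def phiLow {A B : Type*} (φ : A → B → Q) (μ : A → Q) : B → Q :=
  fun y => ⨅ x, lres (μ x) (φ x y)

/-- The underlying set of the Q-category `P𝔸` of contravariant presheaves. -/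
abbrev CPsh {A : Type*} (𝔸 : A → A → Q) := {μ : A → Q // ∀ x x', μ x' * 𝔸 x x' ≤ μ x}

/-- The underlying set of the Q-category `P†𝔹` of covariant presheaves. -/
abbrev CoPsh {B : Type*} (𝔹 : B → B → Q) := {lam : B → Q // ∀ y y', 𝔹 y y' * lam y ≤ lam y'}

/-- The Yoneda embedding `x ↦ 𝔸(·,x)`. -/
def yonedaP {A : Type*} {𝔸 : A → A → Q} (hA : IsQCat 𝔸) (x : A) : CPsh 𝔸 :=
  ⟨fun x' => 𝔸 x' x, fun a b => hA.comp a b x⟩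


lemma le_lres_iff {x y z : Q} : z ≤ lres x y ↔ z * y ≤ x := by
  constructor
  · intro h
    calc z * y ≤ lres x y * y := mul_le_mul_left h y
    _ = ⨆ a ∈ {z : Q | z * y ≤ x}, a * y := by rw [lres, sSup_mul_distrib]
    _ ≤ x := iSup₂_le fun a ha => ha
  · intro h; exact le_sSup h

lemma lres_mul_le {x y : Q} : lres x y * y ≤ x := le_lres_iff.mp le_rfl

/-- if `1 ≤ b` then `lres a b ≤ a`. -/
lemma lres_le_of_one_le {a b : Q} (hb : 1 ≤ b) : lres a b ≤ a :=
  calc lres a b = lres a b * 1 := (mul_one _).symm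
  _ ≤ lres a b * b := mul_le_mul_right hb _
  _ ≤ a := lres_mul_le

/-- Theorem 5.6: `φ ↦ φ*` is an order-preserving bijection between Q-distributors
`𝔸 ⇸ 𝔹` and left adjoint Q-functors `P𝔹 → P𝔸`. -/
theorem kan_bijection {A B : Type*} {𝔸 : A → A → Q} {𝔹 : B → B → Q}
    (hA : IsQCat 𝔸) (hB : IsQCat 𝔹) :
    (∀ G : CPsh 𝔹 → CPsh 𝔸,
      (∀ lam lam' : CPsh 𝔹,
        (⨅ y, lres (lam'.1 y) (lam.1 y)) ≤ ⨅ x, lres ((G lam').1 x) ((G lam).1 x)) →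
      (∃ H : CPsh 𝔸 → CPsh 𝔹, ∀ (lam : CPsh 𝔹) (μ : CPsh 𝔸),
        (⨅ x, lres (μ.1 x) ((G lam).1 x)) = ⨅ y, lres ((H μ).1 y) (lam.1 y)) →
      (IsQDist 𝔸 𝔹 (fun x y => (G (yonedaP hB y)).1 x) ∧
        ∀ (lam : CPsh 𝔹) (x : A),
          (G lam).1 x = phiStar (fun x y => (G (yonedaP hB y)).1 x) lam.1 x)) ∧
    (∀ φ : A → B → Q, IsQDist 𝔸 𝔹 φ →
      ∀ (x : A) (y : B), phiStar φ (fun y' => 𝔹 y' y) x = φ x y) ∧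
    (∀ φ ψ : A → B → Q, IsQDist 𝔸 𝔹 φ → IsQDist 𝔸 𝔹 ψ →
      ((∀ x y, φ x y ≤ ψ x y) ↔
        ∀ (lam : CPsh 𝔹) (x : A), phiStar φ lam.1 x ≤ phiStar ψ lam.1 x)) := by
  have star_eq : ∀ φ : A → B → Q, IsQDist 𝔸 𝔹 φ →
      ∀ (x : A) (y : B), phiStar φ (fun y' => 𝔹 y' y) x = φ x y := by
    intro φ hφ x y
    apply le_antisymm
    · exact iSup_le fun y' => hφ.comp_left x y y'
    · calc φ x y = 1 * φ x y := (one_mul _).symm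
      _ ≤ 𝔹 y y * φ x y := mul_le_mul_left (hB.refl y) _
      _ ≤ ⨆ y', 𝔹 y' y * φ x y' := le_iSup (fun y' => 𝔹 y' y * φ x y') y
  refine ⟨?_, star_eq, ?_⟩
  · -- part (i)
    intro G hGfun ⟨H, hadj⟩
    have hdist : IsQDist 𝔸 𝔹 (fun x y => (G (yonedaP hB y)).1 x) := by
      constructor
      · intro x y y'
        have h1 : 𝔹 y' y ≤ ⨅ z, lres (𝔹 z y) (𝔹 z y') :=
          le_iInf fun z => le_lres_iff.mpr (hB.comp z y' y)
        have h2 := h1.trans (hGfun (yonedaP hB y') (yonedaP hB y))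
        have h3 : 𝔹 y' y ≤ lres ((G (yonedaP hB y)).1 x) ((G (yonedaP hB y')).1 x) :=
          h2.trans (iInf_le _ x)
        exact le_lres_iff.mp h3
      · intro x x' y
        exact (G (yonedaP hB y)).2 x x'
    refine ⟨hdist, ?_⟩
    intro lam x
    set φG : A → B → Q := fun x y => (G (yonedaP hB y)).1 x with hφG
    apply le_antisymm
    · -- Gλ(x) ≤ φG*(λ)(x), uses adjoint
      have hpsh : ∀ a a', phiStar φG lam.1 a' * 𝔸 a a' ≤ phiStar φG lam.1 a := by
        intro a a'
        rw [phiStar, Quantale.iSup_mul_distrib]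
        exact iSup_le fun y => le_trans
          (by rw [mul_assoc]; exact mul_le_mul_right (hdist.comp_right a a' y) _)
          (le_iSup (fun y => lam.1 y * φG a y) y)
      set μ : CPsh 𝔸 := ⟨phiStar φG lam.1, hpsh⟩ with hμ
      -- H μ at y equals P𝔸(G Yy, μ), and λ(y) ≤ that
      have key : ∀ y, lam.1 y ≤ (H μ).1 y := by
        intro y
        have hyon : (⨅ z, lres ((H μ).1 z) (𝔹 z y)) ≤ (H μ).1 y :=
          (iInf_le _ y).trans (lres_le_of_one_le (hB.refl y))
        have := (hadj (yonedaP hB y) μ).le.trans hyon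
        refine le_trans ?_ this
        refine le_iInf fun a => le_lres_iff.mpr ?_
        exact le_iSup (fun y' => lam.1 y' * φG a y') y
      have h1 : (1 : Q) ≤ ⨅ y, lres ((H μ).1 y) (lam.1 y) :=
        le_iInf fun y => le_lres_iff.mpr (by rw [one_mul]; exact key y)
      have h2 : (1 : Q) ≤ ⨅ a, lres (μ.1 a) ((G lam).1 a) := by
        rw [hadj lam μ]; exact h1
      have := le_lres_iff.mp (h2.trans (iInf_le _ x))
      rwa [one_mul] at this
    · -- φG*(λ)(x) ≤ Gλ(x)
      refine iSup_le fun y => ?_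
      have h1 : lam.1 y ≤ ⨅ z, lres (lam.1 z) (𝔹 z y) :=
        le_iInf fun z => le_lres_iff.mpr (lam.2 z y)
      have h2 := h1.trans ((hGfun (yonedaP hB y) lam).trans (iInf_le _ x))
      exact le_lres_iff.mp h2
  · -- part (iii)
    intro φ ψ hφ hψ
    constructor
    · intro h lam x
      exact iSup_le fun y => le_trans (mul_le_mul_right (h x y) _)
        (le_iSup (fun y => lam.1 y * ψ x y) y)
    · intro h x y
      have := h ⟨fun y' => 𝔹 y' y, fun a b => hB.comp a b y⟩ x
      rwa [star_eq φ hφ x y, star_eq ψ hψ x y] at this
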